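/- In the binomial model, every equilibrium is a lower interval strictly below K: if S ∈ ℰ, then there exists y ∈ 𝕏 with 0 < y < K such that S = (0,y] ∩ 𝕏 = {x ∈ 𝕏 : x ≤ y}. -/

import Mathlib

open MeasureTheory ProbabilityTheory Set Filter Topology
open scoped ENNReal ENat

noncomputable section

/-- The σ-algebra generated by the first `n+1` coordinates of the path space:
the natural filtration of the coordinate process at time `n`. -/
def pathSigma (𝕏 : Type*) [m : MeasurableSpace 𝕏] (n : ℕ) : MeasurableSpace (ℕ → 𝕏) :=
  ⨆ i ∈ Finset.range (n + 1), MeasurableSpace.comap (fun ω : ℕ → 𝕏 => ω i) m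

/-- `Pr` is the family of laws of the time-homogeneous Markov chain with one-step
transition kernel `Q`: under `Pr x` the chain starts at `x`, and the Markov property
`Pr^x(X_{n+1} ∈ A | 𝓕_n) = Q(X_n, A)` holds. -/
structure IsMarkovChainLaw {𝕏 : Type*} [MeasurableSpace 𝕏]
    (Pr : Kernel 𝕏 (ℕ → 𝕏)) (Q : Kernel 𝕏 𝕏) : Prop where
  start : ∀ x : 𝕏, Pr x {ω | ω 0 = x} = 1
  markov : ∀ (x : 𝕏) (n : ℕ) (B : Set (ℕ → 𝕏)), MeasurableSet[pathSigma 𝕏 n] B →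
    ∀ A : Set 𝕏, MeasurableSet A →
      Pr x (B ∩ {ω | ω (n + 1) ∈ A}) = ∫⁻ ω in B, Q (ω n) A ∂(Pr x)

/-- The first hitting time `ρ(x,S) = inf {t ≥ 1 : X_t ∈ S}` along the path `ω`
(equal to `⊤` if `S` is never reached at a time `≥ 1`). -/
def hitTime {𝕏 : Type*} (S : Set 𝕏) (ω : ℕ → 𝕏) : ℕ∞ :=
  sInf {n : ℕ∞ | ∃ t : ℕ, n = (t : ℕ∞) ∧ 1 ≤ t ∧ ω t ∈ S}

/-- The discounted payoff `δ(ρ(x,S)) f(X_{ρ(x,S)})` collected along the path `ω`,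
with the convention that it vanishes when `S` is never hit. -/
def stopPayoff {𝕏 : Type*} (δ : ℕ → ℝ) (f : 𝕏 → ℝ) (S : Set 𝕏) (ω : ℕ → 𝕏) : ℝ :=
  if hitTime S ω = ⊤ then 0
  else δ (hitTime S ω).toNat * f (ω (hitTime S ω).toNat)

/-- The objective value `J(x, ρ(x,S)) = 𝔼^x[δ(ρ(x,S)) f(X_{ρ(x,S)})]`. -/
def valJ {𝕏 : Type*} [MeasurableSpace 𝕏] (Pr : Kernel 𝕏 (ℕ → 𝕏)) (δ : ℕ → ℝ) (f : 𝕏 → ℝ)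
    (S : Set 𝕏) (x : 𝕏) : ℝ :=
  ∫ ω, stopPayoff δ f S ω ∂(Pr x)

/-- The operator `Θ(S) = {x ∈ 𝕏 : f(x) ≥ J(x, ρ(x,S))}`. -/
def Θ {𝕏 : Type*} [MeasurableSpace 𝕏] (Pr : Kernel 𝕏 (ℕ → 𝕏)) (δ : ℕ → ℝ) (f : 𝕏 → ℝ)
    (S : Set 𝕏) : Set 𝕏 :=
  {x | valJ Pr δ f S x ≤ f x}

/-- A Borel set `S ⊆ 𝕏` is an equilibrium if `Θ(S) = S`. -/
def IsEquilibrium {𝕏 : Type*} [MeasurableSpace 𝕏] (Pr : Kernel 𝕏 (ℕ → 𝕏)) (δ : ℕ → ℝ)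
    (f : 𝕏 → ℝ) (S : Set 𝕏) : Prop :=
  MeasurableSet S ∧ Θ Pr δ f S = S

/-- The value `V(x,S) = max (f x) (J(x, ρ(x,S)))` associated with an equilibrium `S`. -/
def valV {𝕏 : Type*} [MeasurableSpace 𝕏] (Pr : Kernel 𝕏 (ℕ → 𝕏)) (δ : ℕ → ℝ) (f : 𝕏 → ℝ)
    (S : Set 𝕏) (x : 𝕏) : ℝ :=
  max (f x) (valJ Pr δ f S x)

/-- The state space `𝕏 = {uⁱ : i ∈ ℤ}` of the binomial model. -/
def binGrid (u : ℝ) : Set ℝ := {x | ∃ i : ℤ, x = u ^ i}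

/-- The hyperbolic discount function `δ(t) = 1 / (1 + βt)`. -/
def binDisc (β : ℝ) (t : ℕ) : ℝ := 1 / (1 + β * t)

/-- The payoff function `f(x) = max (K − x) 0`. -/
def binPay (K : ℝ) (x : ℝ) : ℝ := max (K - x) 0

/-- The operator `Θ(S) = {x ∈ 𝕏 : f(x) ≥ J(x, ρ(x,S))}` of the binomial model. -/
def ΘBin (Pr : Kernel ℝ (ℕ → ℝ)) (u β K : ℝ) (S : Set ℝ) : Set ℝ :=
  {x | x ∈ binGrid u ∧ valJ Pr (binDisc β) (binPay K) S x ≤ binPay K x}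

/-!
(a) An equilibrium `S` contains a point below `K`: otherwise the payoff collected on `S` is
always `0`, so `J ≡ 0` and every grid point below `K` would lie in `Θ(S) = S`.

(b) `S` contains no point `x ≥ K`: for the least such `x`, the path that steps down from `x`
until it first meets `S` hits `S` below `K`; it has probability `(1 - p)^m > 0`, so
`J(x) > 0 = f(x)`.

(c) Let `y = max S < K` and let `z < y` be a grid point. The chain started at `z` is a
submartingale (this is `p ≥ 1/(u+1)`), and it moves one grid step at a time, so before the
hitting time `ρ` of `S` it stays below `y`. Hence the payoff collected on `{ρ ≤ n}` is at most
`K - X_{ρ ∧ n}`, and optional stopping gives `𝔼[X_{ρ ∧ n}] ≥ z`. Letting `n → ∞`,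
`J(z) ≤ K - z = f(z)`, so `z ∈ Θ(S) = S`.
-/

section PathFiltration

variable {𝕏 : Type*} [MeasurableSpace 𝕏]

lemma measurable_pathSigma_apply {t n : ℕ} (h : t ≤ n) :
    Measurable[pathSigma 𝕏 n] (fun ω : ℕ → 𝕏 => ω t) :=
  measurable_iff_comap_le.mpr <| le_iSup₂ (f := fun i (_ : i ∈ Finset.range (n + 1)) =>
    MeasurableSpace.comap (fun ω : ℕ → 𝕏 => ω i) ‹_›) t (Finset.mem_range.mpr (by omega))

lemma pathSigma_mono : Monotone (pathSigma 𝕏) := fun _ _ h =>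
  iSup₂_mono' fun i hi => ⟨i, Finset.mem_range.mpr ((Finset.mem_range.mp hi).trans_le (by omega)),
    le_rfl⟩

lemma pathSigma_le (n : ℕ) : pathSigma 𝕏 n ≤ MeasurableSpace.pi :=
  iSup₂_le fun i _ => (measurable_pi_apply i).comap_le

variable (𝕏) in
def pathFiltration : Filtration ℕ (MeasurableSpace.pi : MeasurableSpace (ℕ → 𝕏)) :=
  ⟨pathSigma 𝕏, pathSigma_mono, pathSigma_le⟩

lemma adapted_pathFiltration : Adapted (pathFiltration 𝕏) (fun n (ω : ℕ → 𝕏) => ω n) :=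
  fun _ => measurable_pathSigma_apply le_rfl

end PathFiltration

section HitTime

variable {𝕏 : Type*} {S : Set 𝕏} {ω : ℕ → 𝕏}

lemma hitTime_eq_hittingAfter (S : Set 𝕏) :
    hitTime S = hittingAfter (fun n ω => ω n) S 1 := by
  classical
  funext ω
  have hset : {n : ℕ∞ | ∃ t : ℕ, n = t ∧ 1 ≤ t ∧ ω t ∈ S} = (↑) '' {t | 1 ≤ t ∧ ω t ∈ S} := by
    ext; simp only [mem_ofPred_eq, mem_image]; grind
  simp only [hitTime, hittingAfter, hset, sInf_image]
  split_ifs with h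
  · exact (ENat.natCast_sInf h).symm
  · push Not at h
    exact iInf₂_eq_top.mpr fun t ht => absurd ht.2 (h t ht.1)

lemma mem_of_hitTime_eq {m : ℕ} (h : hitTime S ω = m) : ω m ∈ S := by
  have := hittingAfter_mem_set_of_ne_top (u := fun n ω => ω n) (n := 1) (s := S) (ω := ω)
  rw [← hitTime_eq_hittingAfter, h] at this
  exact this (ENat.natCast_ne_top m)

lemma hitTime_le_iff {n : ℕ} : hitTime S ω ≤ n ↔ ∃ t ∈ Icc 1 n, ω t ∈ S := by
  rw [hitTime_eq_hittingAfter]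
  exact hittingAfter_le_iff

lemma hitTime_eq_of_forall_notMem {m : ℕ} (hm : 1 ≤ m) (hmem : ω m ∈ S)
    (hbefore : ∀ t, 1 ≤ t → t < m → ω t ∉ S) : hitTime S ω = m := by
  rw [hitTime_eq_hittingAfter]
  refine le_antisymm (hittingAfter_le_of_mem hm hmem) (not_lt.mp fun hlt => ?_)
  obtain ⟨t, ht, htS⟩ := hittingAfter_lt_iff.mp hlt
  exact hbefore t ht.1 ht.2 htS

lemma stopPayoff_of_hitTime_eq {δ : ℕ → ℝ} {f : 𝕏 → ℝ} {m : ℕ} (h : hitTime S ω = m) :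
    stopPayoff δ f S ω = δ m * f (ω m) := by
  simp [stopPayoff, h]

lemma stopPayoff_of_hitTime_eq_top {δ : ℕ → ℝ} {f : 𝕏 → ℝ} (h : hitTime S ω = ⊤) :
    stopPayoff δ f S ω = 0 := by
  simp [stopPayoff, h]

lemma stoppedValue_min_hitTime (S : Set 𝕏) (ω : ℕ → 𝕏) (n : ℕ) :
    stoppedValue (fun n ω => ω n) (fun ω => min (hitTime S ω) n) ω
      = ω (min (hitTime S ω) n).toNat := by
  cases h : hitTime S ω using ENat.recTopCoe <;> simp only [stoppedValue, h] <;> rfl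

variable [MeasurableSpace 𝕏]

lemma isStoppingTime_hitTime (hS : MeasurableSet S) :
    IsStoppingTime (pathFiltration 𝕏) (hitTime S) := by
  rw [hitTime_eq_hittingAfter]
  exact adapted_pathFiltration.isStoppingTime_hittingAfter hS

lemma measurable_stopPayoff {δ : ℕ → ℝ} {f : 𝕏 → ℝ} (hS : MeasurableSet S) (hf : Measurable f) :
    Measurable (stopPayoff δ f S) := by
  have hρ : Measurable (hitTime S) := ENat.measurable_iff.mpr fun n =>
    pathSigma_le n _ ((isStoppingTime_hitTime hS).measurableSet_eq n)
  let F : (ℕ → 𝕏) × ℕ∞ → ℝ := fun q => if q.2 = ⊤ then 0 else δ q.2.toNat * f (q.1 q.2.toNat)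
  have hF : Measurable F := measurable_from_prod_countable_left fun m => by
    by_cases hm : m = ⊤
    · simp [F, hm]
    · simp only [F, hm, if_false]
      exact measurable_const.mul (hf.comp (measurable_pi_apply _))
  exact hF.comp (measurable_id.prodMk hρ)

lemma tendsto_integral_indicator_hitTime_le {δ : ℕ → ℝ} {f : 𝕏 → ℝ} {μ : Measure (ℕ → 𝕏)}
    (hS : MeasurableSet S) (hint : Integrable (stopPayoff δ f S) μ) :
    Tendsto (fun n : ℕ => ∫ ω, {ω | hitTime S ω ≤ n}.indicator (stopPayoff δ f S) ω ∂μ) atTop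
      (𝓝 (∫ ω, stopPayoff δ f S ω ∂μ)) := by
  have hmeas : ∀ n : ℕ, MeasurableSet {ω : ℕ → 𝕏 | hitTime S ω ≤ n} := fun n =>
    pathSigma_le n _ (isStoppingTime_hitTime hS n)
  refine tendsto_integral_of_dominated_convergence (fun ω => ‖stopPayoff δ f S ω‖)
    (fun n => (hint.indicator (hmeas n)).aestronglyMeasurable) hint.norm
    (fun n => ae_of_all _ fun ω => norm_indicator_le_norm_self _ ω) (ae_of_all _ fun ω => ?_)
  cases h : hitTime S ω using ENat.recTopCoe with
  | top =>
    rw [stopPayoff_of_hitTime_eq_top h]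
    exact tendsto_const_nhds.congr fun n => (indicator_of_notMem
      (show ω ∉ {ω | hitTime S ω ≤ n} from fun hn : hitTime S ω ≤ n =>
        (h ▸ hn).not_gt (ENat.natCast_lt_top n)) _).symm
  | coe m =>
    refine tendsto_const_nhds.congr' ((eventually_ge_atTop m).mono fun n hn => ?_)
    exact (indicator_of_mem (show ω ∈ {ω | hitTime S ω ≤ n} by simp [h, hn]) _).symm

end HitTime

section MarkovChain

variable {𝕏 : Type*} [MeasurableSpace 𝕏] {Pr : Kernel 𝕏 (ℕ → 𝕏)} {Q : Kernel 𝕏 𝕏}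

namespace IsMarkovChainLaw

lemma map_pair_restrict [IsFiniteKernel Pr] [IsSFiniteKernel Q] (hc : IsMarkovChainLaw Pr Q)
    (x : 𝕏) (n : ℕ) {s : Set (ℕ → 𝕏)} (hs : MeasurableSet[pathSigma 𝕏 n] s) :
    ((Pr x).restrict s).map (fun ω => (ω n, ω (n + 1)))
      = ((Pr x).restrict s).map (fun ω => ω n) ⊗ₘ Q := by
  have hn := measurable_pi_apply (X := fun _ : ℕ => 𝕏) n
  have hn' := measurable_pi_apply (X := fun _ : ℕ => 𝕏) (n + 1)
  have hrect : ∀ A B, MeasurableSet A → MeasurableSet B →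
      ((Pr x).restrict s).map (fun ω => (ω n, ω (n + 1))) (A ×ˢ B)
        = (((Pr x).restrict s).map (fun ω => ω n) ⊗ₘ Q) (A ×ˢ B) := by
    intro A B hA hB
    have hsA : MeasurableSet[pathSigma 𝕏 n] (s ∩ (fun ω => ω n) ⁻¹' A) :=
      hs.inter (measurable_pathSigma_apply le_rfl hA)
    rw [Measure.map_apply (hn.prodMk hn') (hA.prod hB), Measure.compProd_apply_prod hA hB,
      setLIntegral_map hA (Q.measurable_coe hB) hn, Measure.restrict_restrict (hn hA),
      Measure.restrict_apply ((hn.prodMk hn') (hA.prod hB)),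
      inter_comm ((fun ω : ℕ → 𝕏 => ω n) ⁻¹' A) s, ← hc.markov x n _ hsA B hB]
    congr 1
    ext ω
    simp only [mem_inter_iff, mem_preimage, mem_prod, mem_ofPred_eq]
    tauto
  refine ext_of_generate_finite _ generateFrom_prod.symm isPiSystem_prod ?_ ?_
  · rintro _ ⟨A, hA, B, hB, rfl⟩
    exact hrect A B hA hB
  · simpa only [univ_prod_univ] using hrect univ univ MeasurableSet.univ MeasurableSet.univ

lemma setLIntegral_comp_succ [IsFiniteKernel Pr] [IsSFiniteKernel Q]
    (hc : IsMarkovChainLaw Pr Q) (x : 𝕏) (n : ℕ) {s : Set (ℕ → 𝕏)}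
    (hs : MeasurableSet[pathSigma 𝕏 n] s) {g : 𝕏 × 𝕏 → ℝ≥0∞} (hg : Measurable g) :
    ∫⁻ ω in s, g (ω n, ω (n + 1)) ∂Pr x = ∫⁻ ω in s, ∫⁻ b, g (ω n, b) ∂Q (ω n) ∂Pr x := by
  have hn := measurable_pi_apply (X := fun _ : ℕ => 𝕏) n
  rw [← lintegral_map hg (hn.prodMk (measurable_pi_apply _)), hc.map_pair_restrict x n hs,
    Measure.lintegral_compProd hg, lintegral_map hg.lintegral_kernel_prod_right' hn]

lemma ae_forall_step [IsFiniteKernel Pr] [IsSFiniteKernel Q] (hc : IsMarkovChainLaw Pr Q)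
    {R : Set (𝕏 × 𝕏)} (hR : MeasurableSet R) (hQR : ∀ a, ∀ᵐ b ∂Q a, (a, b) ∈ R) (x : 𝕏) :
    ∀ᵐ ω ∂Pr x, ∀ n, (ω n, ω (n + 1)) ∈ R := by
  refine ae_all_iff.mpr fun n => ?_
  have hg : Measurable (Rᶜ.indicator (1 : 𝕏 × 𝕏 → ℝ≥0∞)) := measurable_one.indicator hR.compl
  have hslice : ∀ a, ∫⁻ b, Rᶜ.indicator 1 (a, b) ∂Q a = 0 := fun a =>
    (lintegral_eq_zero_iff (hg.comp measurable_prodMk_left)).mpr <| by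
      filter_upwards [hQR a] with b hb
      simp [hb]
  have hzero := hc.setLIntegral_comp_succ x n MeasurableSet.univ hg
  simp only [Measure.restrict_univ, hslice, lintegral_zero] at hzero
  filter_upwards [(lintegral_eq_zero_iff (hg.comp ((measurable_pi_apply n).prodMk
    (measurable_pi_apply (n + 1))))).mp hzero] with ω hω
  by_contra h
  simp [indicator_of_mem (show (ω n, ω (n + 1)) ∈ Rᶜ from h)] at hω

lemma ae_start [IsMarkovKernel Pr] [MeasurableSingletonClass 𝕏] (hc : IsMarkovChainLaw Pr Q)
    (x : 𝕏) : ∀ᵐ ω ∂Pr x, ω 0 = x :=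
  ae_iff.mpr <| (prob_compl_eq_zero_iff
    (measurableSet_singleton x |>.preimage (measurable_pi_apply 0))).mpr (hc.start x)

lemma measure_cylinder [MeasurableSingletonClass 𝕏] (hc : IsMarkovChainLaw Pr Q)
    (d : ℕ → 𝕏) (m : ℕ) :
    Pr (d 0) {ω | ∀ k ≤ m, ω k = d k} = ∏ k ∈ Finset.range m, Q (d k) {d (k + 1)} := by
  induction m with
  | zero => simpa using hc.start (d 0)
  | succ m ih =>
    have hC : MeasurableSet[pathSigma 𝕏 m] {ω | ∀ k ≤ m, ω k = d k} := by
      simp only [ofPred_forall]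
      exact .iInter fun k => .iInter fun hk =>
        measurable_pathSigma_apply hk (measurableSet_singleton (d k))
    have hsplit : {ω : ℕ → 𝕏 | ∀ k ≤ m + 1, ω k = d k}
        = {ω | ∀ k ≤ m, ω k = d k} ∩ {ω | ω (m + 1) ∈ ({d (m + 1)} : Set 𝕏)} := by
      ext ω
      simp only [mem_inter_iff, mem_ofPred_eq, mem_singleton_iff]
      exact ⟨fun h => ⟨fun k hk => h k (by omega), h _ le_rfl⟩,
        fun h k hk => (Nat.le_succ_iff.mp hk).elim (h.1 k) fun e => e ▸ h.2⟩
    rw [hsplit, hc.markov _ m _ hC _ (measurableSet_singleton _),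
      setLIntegral_congr_fun (pathSigma_le m _ hC) fun ω hω => by rw [hω m le_rfl],
      setLIntegral_const, ih, Finset.prod_range_succ, mul_comm]

end IsMarkovChainLaw

end MarkovChain

section BinomialGrid

variable {u : ℝ}

lemma binGrid.pos (hu : 0 < u) {x : ℝ} (hx : x ∈ binGrid u) : 0 < x := by
  obtain ⟨i, rfl⟩ := hx
  exact zpow_pos hu i

lemma binGrid.mul_mem (hu : u ≠ 0) {x : ℝ} (hx : x ∈ binGrid u) : u * x ∈ binGrid u := by
  obtain ⟨i, rfl⟩ := hx
  exact ⟨i + 1, by rw [zpow_add_one₀ hu, mul_comm]⟩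

lemma binGrid.div_mem (hu : u ≠ 0) {x : ℝ} (hx : x ∈ binGrid u) : x / u ∈ binGrid u := by
  obtain ⟨i, rfl⟩ := hx
  exact ⟨i - 1, by rw [zpow_sub_one₀ hu, div_eq_mul_inv]⟩

lemma binGrid.le_div_of_lt (hu : 1 < u) {x y : ℝ} (hx : x ∈ binGrid u) (hy : y ∈ binGrid u)
    (hxy : x < y) : x ≤ y / u := by
  obtain ⟨i, rfl⟩ := hx
  obtain ⟨j, rfl⟩ := hy
  have hij : i + 1 ≤ j := (zpow_lt_zpow_iff_right₀ hu).mp hxy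
  rw [le_div_iff₀ (by linarith), ← zpow_add_one₀ (by positivity)]
  exact zpow_le_zpow_right₀ hu.le hij

lemma binGrid.exists_lt (hu : 1 < u) {c : ℝ} (hc : 0 < c) : ∃ i : ℤ, u ^ i < c := by
  obtain ⟨n, hn⟩ := pow_unbounded_of_one_lt c⁻¹ hu
  exact ⟨-n, by rwa [zpow_neg, zpow_natCast, inv_lt_comm₀ (by positivity) hc]⟩

lemma binGrid.measurableSet_of_subset {S : Set ℝ} (hS : S ⊆ binGrid u) : MeasurableSet S := by
  have hrange : binGrid u = range (u ^ · : ℤ → ℝ) := by ext; simp [binGrid, eq_comm]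
  exact ((countable_range _).mono (hrange ▸ hS)).measurableSet

lemma binGrid.exists_isGreatest (hu : 1 < u) {T : Set ℝ} (hT : T ⊆ binGrid u)
    (hne : T.Nonempty) (hbdd : BddAbove T) : ∃ y, IsGreatest T y := by
  obtain ⟨b, hb⟩ := hbdd
  obtain ⟨N, hN⟩ := pow_unbounded_of_one_lt b hu
  obtain ⟨x, hx⟩ := hne
  obtain ⟨i, rfl⟩ := hT hx
  obtain ⟨j, hj, hjmax⟩ := Int.exists_greatest_of_bdd (P := fun j : ℤ => u ^ j ∈ T)
    ⟨N, fun j hj => ((zpow_lt_zpow_iff_right₀ hu).mp ((hb hj).trans_lt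
      (by rwa [zpow_natCast]))).le⟩ ⟨i, hx⟩
  refine ⟨u ^ j, hj, fun w hw => ?_⟩
  obtain ⟨k, rfl⟩ := hT hw
  exact zpow_le_zpow_right₀ hu.le (hjmax k hw)

lemma binGrid.exists_isLeast (hu : 1 < u) {T : Set ℝ} (hT : T ⊆ binGrid u)
    (hne : T.Nonempty) {c : ℝ} (hc : 0 < c) (hcT : ∀ x ∈ T, c ≤ x) : ∃ x, IsLeast T x := by
  obtain ⟨N, hN⟩ := binGrid.exists_lt hu hc
  obtain ⟨x, hx⟩ := hne
  obtain ⟨i, rfl⟩ := hT hx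
  obtain ⟨j, hj, hjmin⟩ := Int.exists_least_of_bdd (P := fun j : ℤ => u ^ j ∈ T)
    ⟨N, fun j hj => ((zpow_lt_zpow_iff_right₀ hu).mp (hN.trans_le (hcT _ hj))).le⟩ ⟨i, hx⟩
  refine ⟨u ^ j, hj, fun w hw => ?_⟩
  obtain ⟨k, rfl⟩ := hT hw
  exact zpow_le_zpow_right₀ hu.le (hjmin k hw)

end BinomialGrid

section BinomialChain

variable {u p : ℝ} {Q : Kernel ℝ ℝ} {Pr : Kernel ℝ (ℕ → ℝ)}

def IsBinomialKernel (u p : ℝ) (Q : Kernel ℝ ℝ) : Prop :=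
  ∀ x, Q x = ENNReal.ofReal p • Measure.dirac (u * x)
    + ENNReal.ofReal (1 - p) • Measure.dirac (x / u)

def IsBinomialPath (u z : ℝ) (ω : ℕ → ℝ) : Prop :=
  ω 0 = z ∧ ∀ n, ω (n + 1) = u * ω n ∨ ω (n + 1) = ω n / u

lemma IsBinomialKernel.lintegral_eq (hQ : IsBinomialKernel u p Q) (g : ℝ → ℝ≥0∞) (x : ℝ) :
    ∫⁻ b, g b ∂Q x = ENNReal.ofReal p * g (u * x) + ENNReal.ofReal (1 - p) * g (x / u) := by
  simp [hQ x, lintegral_add_measure]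

lemma IsBinomialKernel.apply_div_ne_zero (hQ : IsBinomialKernel u p Q) (hp : p < 1) (x : ℝ) :
    Q x {x / u} ≠ 0 := by
  simp [hQ x, hp]

lemma IsBinomialKernel.ae_step (hQ : IsBinomialKernel u p Q) (x : ℝ) :
    ∀ᵐ b ∂Q x, b = u * x ∨ b = x / u := by
  have hmeas : MeasurableSet {b : ℝ | b = u * x ∨ b = x / u} :=
    (measurableSet_singleton _).union (measurableSet_singleton _)
  simp only [hQ x, ae_add_measure_iff]
  exact ⟨Measure.ae_smul_measure ((ae_dirac_iff hmeas).mpr (.inl rfl)) _,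
    Measure.ae_smul_measure ((ae_dirac_iff hmeas).mpr (.inr rfl)) _⟩

lemma ae_isBinomialPath [IsMarkovKernel Pr] [IsMarkovKernel Q] (hc : IsMarkovChainLaw Pr Q)
    (hQ : IsBinomialKernel u p Q) (z : ℝ) : ∀ᵐ ω ∂Pr z, IsBinomialPath u z ω := by
  have hR : MeasurableSet {q : ℝ × ℝ | q.2 = u * q.1 ∨ q.2 = q.1 / u} :=
    (measurableSet_eq_fun measurable_snd (measurable_fst.const_mul u)).union
      (measurableSet_eq_fun measurable_snd (measurable_fst.div_const u))
  filter_upwards [hc.ae_start z, hc.ae_forall_step hR hQ.ae_step z] with ω h0 hstep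
  exact ⟨h0, hstep⟩

namespace IsBinomialPath

variable {z : ℝ} {ω : ℕ → ℝ}

lemma mem_binGrid (hu : u ≠ 0) (hω : IsBinomialPath u z ω) (hz : z ∈ binGrid u) (n : ℕ) :
    ω n ∈ binGrid u := by
  induction n with
  | zero => exact hω.1 ▸ hz
  | succ n ih =>
    rcases hω.2 n with h | h <;> rw [h]
    · exact binGrid.mul_mem hu ih
    · exact binGrid.div_mem hu ih

lemma pos (hu : 0 < u) (hω : IsBinomialPath u z ω) (hz : 0 < z) (n : ℕ) : 0 < ω n := by
  induction n with
  | zero => exact hω.1 ▸ hz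
  | succ n ih => rcases hω.2 n with h | h <;> rw [h] <;> positivity

lemma le_mul_pow (hu : 1 ≤ u) (hω : IsBinomialPath u z ω) (hz : 0 < z) (n : ℕ) :
    ω n ≤ z * u ^ n := by
  induction n with
  | zero => simp [hω.1]
  | succ n ih =>
    have hpos := hω.pos (zero_lt_one.trans_le hu) hz n
    rw [pow_succ, ← mul_assoc]
    rcases hω.2 n with h | h <;> rw [h]
    · nlinarith
    · calc ω n / u ≤ ω n := div_le_self hpos.le hu
        _ ≤ z * u ^ n := ih
        _ ≤ z * u ^ n * u := le_mul_of_one_le_right (by positivity) hu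

lemma le_div_of_forall_ne (hu : 1 < u) (hω : IsBinomialPath u z ω) (hz : z ∈ binGrid u)
    {y : ℝ} (hy : y ∈ binGrid u) (hzy : z < y) (n : ℕ) (hne : ∀ t ≤ n, ω t ≠ y) :
    ω n ≤ y / u := by
  induction n with
  | zero => exact hω.1 ▸ binGrid.le_div_of_lt hu hz hy hzy
  | succ n ih =>
    have hu0 : 0 < u := zero_lt_one.trans hu
    have hle := ih fun t ht => hne t (ht.trans n.le_succ)
    have hpos := hω.pos hu0 (binGrid.pos hu0 hz) n
    have hle_y : ω (n + 1) ≤ y := by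
      rcases hω.2 n with h | h <;> rw [h]
      · rwa [le_div_iff₀ (by linarith), mul_comm] at hle
      · exact (div_le_self hpos.le hu.le).trans
          (hle.trans (div_le_self (binGrid.pos hu0 hy).le hu.le))
    exact binGrid.le_div_of_lt hu (hω.mem_binGrid hu0.ne' hz _) hy
      (hle_y.lt_of_ne (hne _ le_rfl))

end IsBinomialPath

end BinomialChain

section Submartingale

variable {u p : ℝ} {Q : Kernel ℝ ℝ} {Pr : Kernel ℝ (ℕ → ℝ)}

lemma ofReal_le_binomial_mean (hu : 1 ≤ u) (hp_lb : 1 / (u + 1) ≤ p) (hp_ub : p ≤ 1) (a : ℝ) :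
    ENNReal.ofReal a ≤ ENNReal.ofReal p * ENNReal.ofReal (u * a)
      + ENNReal.ofReal (1 - p) * ENNReal.ofReal (a / u) := by
  rcases le_or_gt a 0 with ha | ha
  · simp [ENNReal.ofReal_of_nonpos ha]
  have hp : 0 ≤ p * (u + 1) - 1 := by
    rw [div_le_iff₀ (by linarith)] at hp_lb; linarith
  have hp0 : 0 ≤ p := by nlinarith
  rw [← ENNReal.ofReal_mul hp0, ← ENNReal.ofReal_mul (by linarith),
    ← ENNReal.ofReal_add (mul_nonneg hp0 (by positivity))
      (mul_nonneg (by linarith) (by positivity))]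
  refine ENNReal.ofReal_le_ofReal ?_
  have key : p * (u * a) + (1 - p) * (a / u) - a = (u - 1) * (p * (u + 1) - 1) * a / u := by
    field_simp; ring
  have : 0 ≤ (u - 1) * (p * (u + 1) - 1) * a / u :=
    div_nonneg (mul_nonneg (mul_nonneg (by linarith) hp) ha.le) (by linarith)
  linarith

lemma submartingale_binomial [IsMarkovKernel Pr] [IsMarkovKernel Q] (hu : 1 ≤ u)
    (hp_lb : 1 / (u + 1) ≤ p) (hp_ub : p ≤ 1) (hc : IsMarkovChainLaw Pr Q)
    (hQ : IsBinomialKernel u p Q) {z : ℝ} (hz : 0 < z) :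
    Submartingale (fun n ω => ω n) (pathFiltration ℝ) (Pr z) := by
  have hpath := ae_isBinomialPath hc hQ z
  have hint : ∀ n, Integrable (fun ω : ℕ → ℝ => ω n) (Pr z) := fun n =>
    Integrable.of_bound (measurable_pi_apply n).aestronglyMeasurable (z * u ^ n) <| by
      filter_upwards [hpath] with ω hω
      rw [Real.norm_of_nonneg (hω.pos (zero_lt_one.trans_le hu) hz n).le]
      exact hω.le_mul_pow hu hz n
  have hnonneg : ∀ n, 0 ≤ᵐ[Pr z] fun ω : ℕ → ℝ => ω n := fun n => by
    filter_upwards [hpath] with ω hω using (hω.pos (zero_lt_one.trans_le hu) hz n).le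
  refine submartingale_of_setIntegral_le_succ
    adapted_pathFiltration.stronglyAdapted hint fun n s hs => ?_
  have hlint : ∫⁻ ω in s, ENNReal.ofReal (ω n) ∂Pr z
      ≤ ∫⁻ ω in s, ENNReal.ofReal (ω (n + 1)) ∂Pr z := by
    rw [hc.setLIntegral_comp_succ z n hs (g := fun q => ENNReal.ofReal q.2)
      measurable_snd.ennreal_ofReal]
    exact lintegral_mono fun ω => (ofReal_le_binomial_mean hu hp_lb hp_ub (ω n)).trans_eq
      (hQ.lintegral_eq _ _).symm
  rwa [← ofReal_integral_eq_lintegral_ofReal (hint n).integrableOn (ae_restrict_of_ae (hnonneg n)),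
    ← ofReal_integral_eq_lintegral_ofReal (hint _).integrableOn (ae_restrict_of_ae (hnonneg _)),
    ENNReal.ofReal_le_ofReal_iff (integral_nonneg_of_ae (ae_restrict_of_ae (hnonneg _)))] at hlint

end Submartingale

section Payoff

variable {β K : ℝ} {S : Set ℝ} {ω : ℕ → ℝ}

lemma binDisc_pos (hβ : 0 ≤ β) (t : ℕ) : 0 < binDisc β t := by
  unfold binDisc; positivity

lemma binDisc_le_one (hβ : 0 ≤ β) (t : ℕ) : binDisc β t ≤ 1 := by
  unfold binDisc
  rw [div_le_one (by positivity)]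
  exact le_add_of_nonneg_right (by positivity)

lemma binPay_of_le {x : ℝ} (h : x ≤ K) : binPay K x = K - x := max_eq_left (by linarith)

lemma binPay_of_ge {x : ℝ} (h : K ≤ x) : binPay K x = 0 := max_eq_right (by linarith)

lemma stopPayoff_nonneg (hβ : 0 ≤ β) : 0 ≤ stopPayoff (binDisc β) (binPay K) S ω := by
  cases h : hitTime S ω using ENat.recTopCoe with
  | top => rw [stopPayoff_of_hitTime_eq_top h]
  | coe m =>
    rw [stopPayoff_of_hitTime_eq h]
    exact mul_nonneg (binDisc_pos hβ m).le (le_max_right _ _)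

lemma stopPayoff_le (hβ : 0 ≤ β) (hK : 0 ≤ K) (hS : ∀ x ∈ S, 0 ≤ x) :
    stopPayoff (binDisc β) (binPay K) S ω ≤ K := by
  cases h : hitTime S ω using ENat.recTopCoe with
  | top => rw [stopPayoff_of_hitTime_eq_top h]; exact hK
  | coe m =>
    rw [stopPayoff_of_hitTime_eq h]
    have hpay : binPay K (ω m) ≤ K := max_le (by linarith [hS _ (mem_of_hitTime_eq h)]) hK
    exact (mul_le_of_le_one_left (le_max_right _ _) (binDisc_le_one hβ m)).trans hpay

lemma integrable_stopPayoff {μ : Measure (ℕ → ℝ)} [IsFiniteMeasure μ] (hβ : 0 ≤ β) (hK : 0 ≤ K)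
    (hSm : MeasurableSet S) (hS : ∀ x ∈ S, 0 ≤ x) :
    Integrable (stopPayoff (binDisc β) (binPay K) S) μ :=
  Integrable.of_bound
    (measurable_stopPayoff hSm (by unfold binPay; fun_prop)).aestronglyMeasurable K
    (ae_of_all _ fun _ => by
      rw [Real.norm_of_nonneg (stopPayoff_nonneg hβ)]; exact stopPayoff_le hβ hK hS)

end Payoff

section Equilibrium

variable {u p β K : ℝ} {S : Set ℝ} {Pr : Kernel ℝ (ℕ → ℝ)} {Q : Kernel ℝ ℝ}

lemma exists_mem_lt_of_ΘBin_eq (hu : 1 < u) (hK : 0 < K) (hS : ΘBin Pr u β K S = S) :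
    ∃ a ∈ S, a < K := by
  by_contra! hge
  have hzero : valJ Pr (binDisc β) (binPay K) S = 0 := by
    funext x
    refine (integral_congr_ae (ae_of_all _ fun ω => ?_)).trans (integral_zero _ _)
    cases h : hitTime S ω using ENat.recTopCoe with
    | top => exact stopPayoff_of_hitTime_eq_top h
    | coe m => simp [stopPayoff_of_hitTime_eq h, binPay_of_ge (hge _ (mem_of_hitTime_eq h))]
  obtain ⟨i, hi⟩ := binGrid.exists_lt hu hK
  have hmem : u ^ i ∈ ΘBin Pr u β K S := ⟨⟨i, rfl⟩, by rw [hzero]; exact le_max_right _ _⟩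
  exact (hge _ (hS ▸ hmem)).not_gt hi

lemma valJ_pos_of_descent [IsFiniteKernel Pr] (hp_ub : p < 1) (hβ : 0 ≤ β)
    (hK : 0 ≤ K) (hc : IsMarkovChainLaw Pr Q) (hQ : IsBinomialKernel u p Q)
    (hSm : MeasurableSet S) (hS0 : ∀ x ∈ S, 0 ≤ x) {x : ℝ} {m : ℕ} (hm : 1 ≤ m)
    (hxm : x / u ^ m ∈ S) (hxK : x / u ^ m < K) (hbefore : ∀ k, 1 ≤ k → k < m → x / u ^ k ∉ S) :
    0 < valJ Pr (binDisc β) (binPay K) S x := by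
  set d : ℕ → ℝ := fun k => x / u ^ k
  set C := {ω : ℕ → ℝ | ∀ k ≤ m, ω k = d k}
  have hCm : MeasurableSet C := by
    simp only [C, ofPred_forall]
    exact .iInter fun k => .iInter fun _ =>
      measurableSet_eq_fun (measurable_pi_apply k) measurable_const
  have hC : Pr x C ≠ 0 := by
    have hd0 : d 0 = x := by simp [d]
    rw [← hd0, hc.measure_cylinder d m, Finset.prod_ne_zero_iff]
    intro k _
    rw [show d (k + 1) = d k / u by simp [d, pow_succ, div_div]]
    exact hQ.apply_div_ne_zero hp_ub _
  have hpay : ∀ ω ∈ C, stopPayoff (binDisc β) (binPay K) S ω = binDisc β m * (K - d m) := by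
    intro ω hω
    have hhit : hitTime S ω = m := hitTime_eq_of_forall_notMem hm (by rwa [hω m le_rfl])
      fun t h1 h2 => by rw [hω t h2.le]; exact hbefore t h1 h2
    rw [stopPayoff_of_hitTime_eq hhit, hω m le_rfl, binPay_of_le hxK.le]
  calc 0 < (Pr x).real C * (binDisc β m * (K - d m)) :=
        mul_pos (ENNReal.toReal_pos hC (measure_ne_top _ _))
          (mul_pos (binDisc_pos hβ m) (sub_pos.mpr hxK))
    _ = ∫ ω in C, stopPayoff (binDisc β) (binPay K) S ω ∂Pr x := by
        rw [setIntegral_congr_fun hCm hpay, setIntegral_const, smul_eq_mul]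
    _ ≤ valJ Pr (binDisc β) (binPay K) S x :=
        setIntegral_le_integral (integrable_stopPayoff hβ hK hSm hS0)
          (ae_of_all _ fun _ => stopPayoff_nonneg hβ)

lemma lt_of_mem_of_ΘBin_eq [IsFiniteKernel Pr] (hu : 1 < u) (hp_ub : p < 1) (hβ : 0 ≤ β)
    (hK : 0 < K) (hc : IsMarkovChainLaw Pr Q) (hQ : IsBinomialKernel u p Q)
    (hSsub : S ⊆ binGrid u) (hS : ΘBin Pr u β K S = S) : ∀ x ∈ S, x < K := by
  by_contra! ⟨x₀, hx₀S, hx₀K⟩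
  obtain ⟨x, ⟨hxS, hxK⟩, hxmin⟩ := binGrid.exists_isLeast hu (inter_subset_left.trans hSsub)
    ⟨x₀, hx₀S, hx₀K⟩ hK fun _ h => h.2
  obtain ⟨a, haS, haK⟩ := exists_mem_lt_of_ΘBin_eq hu hK hS
  have hdesc : ∃ k, 1 ≤ k ∧ x / u ^ k ∈ S := by
    obtain ⟨i, rfl⟩ := hSsub hxS
    obtain ⟨j, rfl⟩ := hSsub haS
    have hji : j < i := (zpow_lt_zpow_iff_right₀ hu).mp (haK.trans_le hxK)
    refine ⟨(i - j).toNat, by omega, ?_⟩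
    rwa [← zpow_natCast, ← zpow_sub₀ (by positivity), Int.toNat_of_nonneg (by omega),
      sub_sub_cancel]
  classical
  have hm := Nat.find_spec hdesc
  have hxpos : 0 < x := binGrid.pos (zero_lt_one.trans hu) (hSsub hxS)
  have hmK : x / u ^ Nat.find hdesc < K := by
    by_contra! h
    exact (div_lt_self hxpos (one_lt_pow₀ hu (by omega))).not_ge (hxmin ⟨hm.2, h⟩)
  have hJ := valJ_pos_of_descent hp_ub hβ hK.le hc hQ (binGrid.measurableSet_of_subset hSsub)
    (fun y hy => (binGrid.pos (zero_lt_one.trans hu) (hSsub hy)).le) hm.1 hm.2 hmK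
    fun k h1 h2 hk => Nat.find_min hdesc h2 ⟨h1, hk⟩
  have hΘ : x ∈ ΘBin Pr u β K S := hS.symm ▸ hxS
  exact hJ.not_ge (hΘ.2.trans_eq (binPay_of_ge hxK))

lemma indicator_stopPayoff_le_stoppedValue (hu : 1 < u) (hβ : 0 ≤ β) (hSsub : S ⊆ binGrid u)
    {y : ℝ} (hy : IsGreatest S y) (hyK : y ≤ K) {z : ℝ} (hz : z ∈ binGrid u) (hzy : z < y)
    {ω : ℕ → ℝ} (hω : IsBinomialPath u z ω) (n : ℕ) :
    {ω | hitTime S ω ≤ n}.indicator (stopPayoff (binDisc β) (binPay K) S) ω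
      ≤ K - stoppedValue (fun n ω => ω n) (fun ω => min (hitTime S ω) n) ω := by
  rw [stoppedValue_min_hitTime]
  by_cases hn : hitTime S ω ≤ n
  · obtain ⟨m, hm⟩ := ENat.ne_top_iff_exists.mp (ne_top_of_le_ne_top (ENat.natCast_ne_top n) hn)
    replace hm := hm.symm
    have hmS := mem_of_hitTime_eq hm
    have hmK : ω m ≤ K := (hy.2 hmS).trans hyK
    rw [indicator_of_mem (show ω ∈ {ω | hitTime S ω ≤ n} from hn), stopPayoff_of_hitTime_eq hm,
      binPay_of_le hmK, min_eq_left hn, hm, ENat.toNat_natCast]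
    exact mul_le_of_le_one_left (sub_nonneg.mpr hmK) (binDisc_le_one hβ m)
  · have hne : ∀ t ≤ n, ω t ≠ y := by
      intro t ht hty
      rcases t.eq_zero_or_pos with rfl | ht1
      · exact hzy.ne (hω.1 ▸ hty)
      · exact hn (hitTime_le_iff.mpr ⟨t, ⟨ht1, ht⟩, hty ▸ hy.1⟩)
    have hωn := hω.le_div_of_forall_ne hu hz (hSsub hy.1) hzy n hne
    have hyu := div_le_self (binGrid.pos (zero_lt_one.trans hu) (hSsub hy.1)).le hu.le
    rw [indicator_of_notMem (show ω ∉ {ω | hitTime S ω ≤ n} from hn),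
      min_eq_right (not_le.mp hn).le, ENat.toNat_natCast]
    linarith

lemma valJ_le_of_isGreatest [IsMarkovKernel Pr] [IsMarkovKernel Q] (hu : 1 < u)
    (hp_lb : 1 / (u + 1) ≤ p) (hp_ub : p ≤ 1) (hβ : 0 ≤ β) (hc : IsMarkovChainLaw Pr Q)
    (hQ : IsBinomialKernel u p Q) (hSsub : S ⊆ binGrid u) {y : ℝ} (hy : IsGreatest S y)
    (hyK : y ≤ K) {z : ℝ} (hz : z ∈ binGrid u) (hzy : z < y) :
    valJ Pr (binDisc β) (binPay K) S z ≤ K - z := by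
  have hu0 : 0 < u := zero_lt_one.trans hu
  have hSm := binGrid.measurableSet_of_subset hSsub
  have hS0 : ∀ x ∈ S, 0 ≤ x := fun x hx => (binGrid.pos hu0 (hSsub hx)).le
  have hK : 0 ≤ K := (hS0 y hy.1).trans hyK
  have hX := submartingale_binomial hu.le hp_lb hp_ub hc hQ (binGrid.pos hu0 hz)
  have hρ := isStoppingTime_hitTime (𝕏 := ℝ) hSm
  have hτ : ∀ n : ℕ, IsStoppingTime (pathFiltration ℝ) (fun ω => min (hitTime S ω) n) :=
    hρ.min_const
  have hpay := integrable_stopPayoff (μ := Pr z) hβ hK hSm hS0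
  have hoptional : ∀ n : ℕ, z ≤ ∫ ω, stoppedValue (fun n ω => ω n)
      (fun ω => min (hitTime S ω) n) ω ∂Pr z := fun n => by
    have h := hX.expected_stoppedValue_mono (isStoppingTime_const _ 0) (hτ n)
      (fun _ => zero_le) (fun _ => min_le_right _ _)
    calc z = ∫ _, z ∂Pr z := by simp
      _ = _ := integral_congr_ae ((hc.ae_start z).mono fun _ h0 => h0.symm)
      _ ≤ _ := h
  have hbound : ∀ n : ℕ, ∫ ω, {ω | hitTime S ω ≤ n}.indicator
      (stopPayoff (binDisc β) (binPay K) S) ω ∂Pr z ≤ K - z := fun n => by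
    have hint := hX.integrable_stoppedValue (hτ n) (fun _ => min_le_right _ _)
    calc _ ≤ ∫ ω, (K - stoppedValue (fun n ω => ω n) (fun ω => min (hitTime S ω) n) ω) ∂Pr z :=
          integral_mono_ae (hpay.indicator (pathSigma_le n _ (hρ n)))
            ((integrable_const K).sub hint) <| by
            filter_upwards [ae_isBinomialPath hc hQ z] with ω hω using
              indicator_stopPayoff_le_stoppedValue hu hβ hSsub hy hyK hz hzy hω n
      _ ≤ K - z := by
          rw [integral_sub (integrable_const K) hint, integral_const, probReal_univ, one_smul]
          linarith [hoptional n]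
  exact le_of_tendsto' (tendsto_integral_indicator_hitTime_le hSm hpay) hbound

end Equilibrium

/-- In the binomial model, every equilibrium is a lower interval strictly below `K`:
if `S ∈ ℰ` then `S = (0,y] ∩ 𝕏` for some `y ∈ 𝕏` with `0 < y < K`. -/
theorem binomial_equilibrium_is_interval
    (u p β K : ℝ) (hu : 1 < u) (hp_lb : 1 / (u + 1) ≤ p) (hp_ub : p < 1)
    (hβ : 0 < β) (hK : 0 < K)
    (Pr : Kernel ℝ (ℕ → ℝ)) [IsMarkovKernel Pr] (Q : Kernel ℝ ℝ) [IsMarkovKernel Q]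
    (hchain : IsMarkovChainLaw Pr Q)
    (hQ : ∀ x : ℝ, Q x = ENNReal.ofReal p • Measure.dirac (u * x)
      + ENNReal.ofReal (1 - p) • Measure.dirac (x / u))
    (S : Set ℝ) (hSsub : S ⊆ binGrid u) (hS : ΘBin Pr u β K S = S) :
    ∃ y ∈ binGrid u, 0 < y ∧ y < K ∧ S = Set.Ioc 0 y ∩ binGrid u := by
  have hu0 : 0 < u := zero_lt_one.trans hu
  have hlt := lt_of_mem_of_ΘBin_eq hu hp_ub hβ.le hK hchain hQ hSsub hS
  obtain ⟨a, haS, -⟩ := exists_mem_lt_of_ΘBin_eq hu hK hS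
  obtain ⟨y, hy⟩ := binGrid.exists_isGreatest hu hSsub ⟨a, haS⟩ ⟨K, fun x hx => (hlt x hx).le⟩
  refine ⟨y, hSsub hy.1, binGrid.pos hu0 (hSsub hy.1), hlt y hy.1,
    Subset.antisymm (fun x hx => ⟨⟨binGrid.pos hu0 (hSsub hx), hy.2 hx⟩, hSsub hx⟩) ?_⟩
  rintro z ⟨⟨-, hzy⟩, hz⟩
  rcases hzy.lt_or_eq with hzy | rfl
  · rw [← hS]
    refine ⟨hz, ?_⟩
    rw [binPay_of_le (hzy.trans (hlt y hy.1)).le]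
    exact valJ_le_of_isGreatest hu hp_lb hp_ub.le hβ.le hchain hQ hSsub hy (hlt y hy.1).le hz hzy
  · exact hy.1

end
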